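/- arXiv:1604.03463 — 5 statements merged into one kernel-verified Lean document; each statement's English description precedes it below -/
import Mathlib

section
/- Let N ≥ 1, let Φ and Ψ be real symmetric positive definite N×N matrices, and let α be a real number. Then the Algebraic Riccati Equation ΛΦΛ − 2αΛ − Ψ = 0 has a unique solution Λ in the set of real symmetric positive definite N×N matrices. -/
open Matrix

section MgigAux

variable {n : Type*} [Fintype n] [DecidableEq n]

lemma auxA {A : Matrix n n ℝ} (hA : A.PosSemidef) (h : IsUnit A) : A.PosDef := by
  refine Matrix.PosDef.of_dotProduct_mulVec_pos hA.1 (fun x hx => ?_)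
  rcases lt_or_eq_of_le (hA.dotProduct_mulVec_nonneg x) with h' | h'
  · exact h'
  · exact absurd (Matrix.mulVec_injective_iff_isUnit.mpr h
      (a₁ := x) (a₂ := 0) (by rw [Matrix.mulVec_zero]; exact (hA.dotProduct_mulVec_zero_iff x).mp h'.symm)) hx

lemma auxB {A B : Matrix n n ℝ} (hA : A.PosDef) (hB : IsUnit B) : (B * A * Bᴴ).PosDef := by
  refine Matrix.PosDef.of_dotProduct_mulVec_pos (Matrix.isHermitian_mul_mul_conjTranspose B hA.1) (fun x hx => ?_)
  have hx' : Bᴴ *ᵥ x ≠ 0 := by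
    intro h0
    have : IsUnit Bᴴ := by
      rw [Matrix.isUnit_iff_isUnit_det] at hB ⊢
      simpa using hB
    exact hx (Matrix.mulVec_injective_iff_isUnit.mpr this (a₁ := x) (a₂ := 0) (by rw [Matrix.mulVec_zero]; exact h0))
  simpa only [star_mulVec, conjTranspose_conjTranspose, dotProduct_mulVec, vecMul_vecMul,
    ← Matrix.mul_assoc] using hA.dotProduct_mulVec_pos hx'

lemma auxC {A : Matrix n n ℝ} (hA : A.IsHermitian)
    (h : ∀ i, 0 < hA.eigenvalues i) : A.PosDef := by
  have hU : IsUnit (hA.eigenvectorUnitary : Matrix n n ℝ) :=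
    ⟨⟨(hA.eigenvectorUnitary : Matrix n n ℝ), star (hA.eigenvectorUnitary : Matrix n n ℝ),
      Unitary.mul_star_self_of_mem hA.eigenvectorUnitary.2,
      Unitary.star_mul_self_of_mem hA.eigenvectorUnitary.2⟩, rfl⟩
  have hd : (diagonal (RCLike.ofReal ∘ hA.eigenvalues) : Matrix n n ℝ).PosDef :=
    Matrix.posDef_diagonal_iff.mpr (fun i => by simpa using h i)
  have := auxB hd hU
  rw [hA.spectral_theorem]
  simpa [Matrix.star_eq_conjTranspose] using this

lemma auxQ {T : Matrix n n ℝ} (hT : T.IsHermitian) (i : n) {p q r : ℝ}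
    (h : (p • (T * T) + q • T + r • 1).PosDef) :
    0 < p * (hT.eigenvalues i)^2 + q * hT.eigenvalues i + r := by
  set t := hT.eigenvalues i with ht
  set v : n → ℝ := ⇑(hT.eigenvectorBasis i) with hv
  have hv0 : v ≠ 0 := by
    intro h0
    exact hT.eigenvectorBasis.orthonormal.ne_zero i (by ext j; exact congrFun h0 j)
  have hvv : (0:ℝ) < star v ⬝ᵥ v := Matrix.dotProduct_star_self_pos_iff.mpr hv0
  have hTv : T *ᵥ v = t • v := hT.mulVec_eigenvectorBasis i
  have hmv : (p • (T * T) + q • T + r • 1) *ᵥ v = (p * t^2 + q * t + r) • v := by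
    rw [add_mulVec, add_mulVec, smul_mulVec, smul_mulVec, smul_mulVec,
      ← mulVec_mulVec, hTv, mulVec_smul, hTv, one_mulVec]
    ext j
    simp [smul_smul]
    ring
  have := h.dotProduct_mulVec_pos hv0
  rw [hmv, dotProduct_smul, smul_eq_mul] at this
  nlinarith [hvv, this]

lemma auxPSD {T : Matrix n n ℝ} (hT : T.IsHermitian) {α : ℝ}
    (h1 : (T * T - (α^2) • 1).PosDef) (h2 : (T + α • 1).PosDef) : T.PosSemidef := by
  apply hT.posSemidef_iff_eigenvalues_nonneg.mpr
  intro i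
  show 0 ≤ hT.eigenvalues i
  have e1 := auxQ hT i (p := 1) (q := 0) (r := -α^2) (by convert h1 using 1; module)
  have e2 := auxQ hT i (p := 0) (q := 1) (r := α) (by convert h2 using 1; module)
  nlinarith [e1, e2]

lemma auxADD {T : Matrix n n ℝ} (hT : T.PosSemidef) {α : ℝ}
    (h1 : (T * T - (α^2) • 1).PosDef) : (T + α • 1).PosDef := by
  have hpos : ∀ i, 0 < hT.1.eigenvalues i + α := by
    intro i
    have e1 := auxQ hT.1 i (p := 1) (q := 0) (r := -α^2) (by convert h1 using 1; module)
    have e3 := hT.eigenvalues_nonneg i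
    nlinarith [e1, e3]
  set U := (hT.1.eigenvectorUnitary : Matrix n n ℝ) with hUdef
  have hUU : U * star U = 1 := Unitary.mul_star_self_of_mem hT.1.eigenvectorUnitary.2
  have hU : IsUnit U :=
    ⟨⟨U, star U, hUU, Unitary.star_mul_self_of_mem hT.1.eigenvectorUnitary.2⟩, rfl⟩
  have hd : (diagonal (fun i => hT.1.eigenvalues i + α) : Matrix n n ℝ).PosDef :=
    Matrix.posDef_diagonal_iff.mpr hpos
  have key : T + α • 1 = U * (diagonal (fun i => hT.1.eigenvalues i + α)) * star U := by
    have hdd : (diagonal (fun i => hT.1.eigenvalues i + α) : Matrix n n ℝ)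
        = diagonal (RCLike.ofReal ∘ hT.1.eigenvalues) + α • 1 := by
      rw [smul_one_eq_diagonal, diagonal_add]
      congr 1
    have hsp : U * diagonal (RCLike.ofReal ∘ hT.1.eigenvalues) * star U = T := by
      rw [hUdef]
      exact (hT.1.spectral_theorem.trans (Unitary.conjStarAlgAut_apply _ _)).symm
    rw [hdd, mul_add, add_mul, hsp]
    congr 1
    rw [mul_smul_comm, mul_one, smul_mul_assoc, hUU]
  rw [key]
  simpa [Matrix.star_eq_conjTranspose] using auxB hd hU

end MgigAux

section MgigSqrt

open scoped MatrixOrder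

variable {n : Type*} [Fintype n] [DecidableEq n]

noncomputable def Matrix.PosSemidef.sqrt {A : Matrix n n ℝ} (_hA : A.PosSemidef) : Matrix n n ℝ :=
  CFC.sqrt A

lemma Matrix.PosSemidef.posSemidef_sqrt {A : Matrix n n ℝ} (hA : A.PosSemidef) :
    hA.sqrt.PosSemidef :=
  (CFC.sqrt_nonneg A).posSemidef

lemma Matrix.PosSemidef.sqrt_mul_self {A : Matrix n n ℝ} (hA : A.PosSemidef) :
    hA.sqrt * hA.sqrt = A :=
  CFC.sqrt_mul_sqrt_self A hA.nonneg

lemma Matrix.PosSemidef.eq_sqrt_of_sq_eq {A : Matrix n n ℝ} (hA : A.PosSemidef) {B : Matrix n n ℝ}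
    (hB : B.PosSemidef) (h : A ^ 2 = B) : A = hB.sqrt :=
  (CFC.sqrt_unique (by rw [← pow_two, h]) hA.nonneg).symm

end MgigSqrt

/-- The Algebraic Riccati Equation `ΛΦΛ − 2αΛ − Ψ = 0` associated with the mode of the
`MGIG(Ψ, Φ, ν)` distribution (with `α = ν − (N+1)/2`) has a unique solution among the
real symmetric positive definite `N × N` matrices. -/
theorem mgig_are_unique_posDef_solution (N : ℕ) (hN : 1 ≤ N)
    (Φ Ψ : Matrix (Fin N) (Fin N) ℝ) (hΦ : Φ.PosDef) (hΨ : Ψ.PosDef) (α : ℝ) :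
    ∃! Λ : Matrix (Fin N) (Fin N) ℝ,
      Λ.PosDef ∧ Λ * Φ * Λ - (2 * α) • Λ - Ψ = 0 := by
  set S := hΦ.posSemidef.sqrt with hSdef
  have hSps : S.PosSemidef := hΦ.posSemidef.posSemidef_sqrt
  have hSH : S.IsHermitian := hSps.1
  have hSS : S * S = Φ := hΦ.posSemidef.sqrt_mul_self
  have hSdetU : IsUnit S.det := by
    have h1 : (0:ℝ) < Φ.det := hΦ.det_pos
    rw [← hSS, det_mul] at h1
    exact (by nlinarith : S.det ≠ 0).isUnit
  have hSunit : IsUnit S := (Matrix.isUnit_iff_isUnit_det S).mpr hSdetU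
  have hS : S.PosDef := auxA hSps hSunit
  haveI : Invertible S := S.invertibleOfIsUnitDet hSdetU
  have hSinvH : S⁻¹.IsHermitian := hSH.inv
  have hSinvU : IsUnit S⁻¹ := (Matrix.isUnit_iff_isUnit_det _).mpr (by simpa using hSdetU.unit⁻¹.isUnit)
  -- the matrix C and its square root
  have hSΨS : (S * Ψ * S).PosDef := by
    have := auxB hΨ hSunit
    rwa [hSH.eq] at this
  set C : Matrix (Fin N) (Fin N) ℝ := S * Ψ * S + (α^2) • 1 with hCdef
  have hC : C.PosDef := hSΨS.add_posSemidef
    (by rw [smul_one_eq_diagonal]; exact .diagonal (fun i => sq_nonneg α))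
  set T := hC.posSemidef.sqrt with hTdef
  have hTps : T.PosSemidef := hC.posSemidef.posSemidef_sqrt
  have hTT : T * T = C := hC.posSemidef.sqrt_mul_self
  have h1 : (T * T - (α^2) • 1).PosDef := by
    rw [hTT, hCdef, add_sub_cancel_right]
    exact hSΨS
  set M := T + α • 1 with hMdef
  have hM : M.PosDef := auxADD hTps h1
  have hMM : M * M = S * Ψ * S + (2*α) • M := by
    show (T + α • 1) * (T + α • 1) = S * Ψ * S + (2*α) • (T + α • 1)
    rw [mul_add, add_mul, add_mul, hTT, hCdef]
    simp only [smul_mul_assoc, mul_smul_comm, one_mul, mul_one, smul_smul]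
    module
  set Λ₀ := S⁻¹ * M * S⁻¹ with hΛdef
  have hΛ₀ : Λ₀.PosDef := by
    have := auxB hM hSinvU
    rwa [hSinvH.eq] at this
  have cancel1 : ∀ X : Matrix (Fin N) (Fin N) ℝ, S⁻¹ * (S * X) = X := fun X => by
    rw [← Matrix.mul_assoc, Matrix.nonsing_inv_mul _ hSdetU, one_mul]
  have cancel2 : ∀ X : Matrix (Fin N) (Fin N) ℝ, S * (S⁻¹ * X) = X := fun X => by
    rw [← Matrix.mul_assoc, Matrix.mul_nonsing_inv _ hSdetU, one_mul]
  have hsolve : ∀ Λ : Matrix (Fin N) (Fin N) ℝ, Λ = S⁻¹ * (S * Λ * S) * S⁻¹ := fun Λ => by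
    rw [Matrix.mul_assoc S, cancel1, Matrix.mul_assoc, Matrix.mul_nonsing_inv _ hSdetU, mul_one]
  have heq0 : Λ₀ * Φ * Λ₀ - (2 * α) • Λ₀ - Ψ = 0 := by
    have e1 : Λ₀ * Φ * Λ₀ = S⁻¹ * (M * M) * S⁻¹ := by
      rw [hΛdef, ← hSS]
      simp only [Matrix.mul_assoc, cancel1, cancel2]
    have hSSinv : S * S⁻¹ = 1 := Matrix.mul_nonsing_inv _ hSdetU
    have hSinvS : S⁻¹ * S = 1 := Matrix.nonsing_inv_mul _ hSdetU
    rw [e1, hMM, hΛdef]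
    simp only [mul_add, add_mul, Matrix.mul_assoc, hSSinv, hSinvS, mul_one, one_mul,
      mul_smul_comm, smul_mul_assoc, cancel1, cancel2]
    abel
  refine ⟨Λ₀, ⟨hΛ₀, heq0⟩, ?_⟩
  -- uniqueness
  intro Λ ⟨hΛ, heq⟩
  have heq' : Λ * Φ * Λ = (2 * α) • Λ + Ψ := by
    rw [sub_sub] at heq
    exact sub_eq_zero.mp heq
  set M' := S * Λ * S with hM'def
  have hM' : M'.PosDef := by
    have := auxB hΛ hSunit
    rwa [hSH.eq] at this
  have hM'M' : M' * M' = S * Ψ * S + (2*α) • M' := by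
    have : M' * M' = S * (Λ * Φ * Λ) * S := by
      rw [hM'def, ← hSS]
      simp only [Matrix.mul_assoc, cancel1, cancel2]
    rw [this, heq', hM'def]
    simp only [mul_add, add_mul, mul_smul_comm, smul_mul_assoc, Matrix.mul_assoc]
    abel
  set T' := M' - α • 1 with hT'def
  have hsm1 : (Matrix.IsHermitian (α • (1 : Matrix (Fin N) (Fin N) ℝ))) := by
    rw [smul_one_eq_diagonal]
    exact Matrix.isHermitian_diagonal _
  have hT'H : T'.IsHermitian := hM'.1.sub hsm1
  have hT'T' : T' * T' = C := by
    rw [hT'def, hCdef]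
    rw [sub_mul, mul_sub, mul_sub, hM'M']
    simp only [smul_mul_assoc, mul_smul_comm, one_mul, mul_one, smul_smul]
    module
  have h1' : (T' * T' - (α^2) • 1).PosDef := by
    rw [hT'T', hCdef, add_sub_cancel_right]
    exact hSΨS
  have h2' : (T' + α • 1).PosDef := by
    rw [hT'def, sub_add_cancel]
    exact hM'
  have hT'ps : T'.PosSemidef := auxPSD hT'H h1' h2'
  have hT'eq : T' = T := by
    rw [hTdef]
    exact hT'ps.eq_sqrt_of_sq_eq hC.posSemidef (by rw [pow_two, hT'T'])
  have hM'eq : M' = M := by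
    rw [hMdef, ← hT'eq, hT'def, sub_add_cancel]
  rw [hsolve Λ, ← hM'def, hM'eq, hΛdef]
end

section
/- Let Φ and Ψ be real N×N matrices, α ∈ ℝ, and let H be the 2N×2N block matrix [−α·I, Φ; Ψ, α·I], regarded as a complex matrix. Then a complex number λ is an eigenvalue of H if and only if λ² − α² is an eigenvalue of the complex matrix ΨΦ. -/
open Matrix

lemma mem_spectrum_iff_det_aux {n : Type*} [Fintype n] [DecidableEq n]
    (M : Matrix n n ℂ) (z : ℂ) :
    z ∈ spectrum ℂ M ↔ (z • (1 : Matrix n n ℂ) - M).det = 0 := by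
  rw [spectrum.mem_iff, Matrix.isUnit_iff_isUnit_det, isUnit_iff_ne_zero, not_ne_iff,
    Algebra.algebraMap_eq_smul_one]

lemma map_smul_one_aux {n : Type*} [Fintype n] [DecidableEq n] (r : ℝ) :
    ((r • (1 : Matrix n n ℝ)).map (Complex.ofReal ·)) = (r : ℂ) • 1 := by
  ext i j
  simp only [Matrix.map_apply, Matrix.smul_apply, Matrix.one_apply, smul_eq_mul]
  split_ifs <;> simp

lemma det_blocks_scalar_aux {n : ℕ} (B C : Matrix (Fin n) (Fin n) ℂ) (x y : ℂ) :
    (Matrix.fromBlocks (x • (1 : Matrix (Fin n) (Fin n) ℂ)) B C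
      (y • (1 : Matrix (Fin n) (Fin n) ℂ))).det = 0 ↔
      ((x * y) • (1 : Matrix (Fin n) (Fin n) ℂ) - C * B).det = 0 := by
  by_cases hx : x = 0
  · subst hx
    simp only [zero_mul, zero_smul, zero_sub]
    rw [Matrix.det_neg, Matrix.det_mul]
    have hrhs : ((-1 : ℂ) ^ Fintype.card (Fin n) * (C.det * B.det) = 0) ↔
        B.det * C.det = 0 := by
      rw [mul_eq_zero]
      simp [pow_ne_zero, mul_comm]
    rw [hrhs]
    by_cases hy : y = 0
    · subst hy
      rw [zero_smul]
      rw [← mul_self_eq_zero (a := (Matrix.fromBlocks 0 B C 0).det), ← Matrix.det_mul,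
        Matrix.fromBlocks_multiply]
      simp only [Matrix.zero_mul, Matrix.mul_zero, add_zero, zero_add,
        Matrix.det_fromBlocks_zero₂₁, Matrix.det_mul]
      constructor
      · intro h
        rcases mul_eq_zero.mp h with h | h <;> rcases mul_eq_zero.mp h with h | h <;>
          simp [h, mul_comm]
      · intro h
        rcases mul_eq_zero.mp h with h | h <;> simp [h]
    · haveI : Invertible (y • (1 : Matrix (Fin n) (Fin n) ℂ)) :=
        ⟨y⁻¹ • 1, by rw [Matrix.smul_mul, Matrix.one_mul, smul_smul, inv_mul_cancel₀ hy,
          one_smul], by rw [Matrix.smul_mul, Matrix.one_mul, smul_smul,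
          mul_inv_cancel₀ hy, one_smul]⟩
      have hinv : ⅟ (y • (1 : Matrix (Fin n) (Fin n) ℂ)) = y⁻¹ • 1 :=
        invOf_eq_right_inv (by rw [Matrix.smul_mul, Matrix.one_mul, smul_smul,
          mul_inv_cancel₀ hy, one_smul])
      rw [Matrix.det_fromBlocks₂₂, hinv]
      have h1 : B * (y⁻¹ • (1 : Matrix (Fin n) (Fin n) ℂ)) * C = y⁻¹ • (B * C) := by
        rw [Matrix.mul_smul, Matrix.mul_one, Matrix.smul_mul]
      rw [h1, zero_sub, Matrix.det_neg, Matrix.det_smul, Matrix.det_smul, Matrix.det_one,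
        mul_one, Matrix.det_mul]
      have h2 : ((-1 : ℂ)) ^ Fintype.card (Fin n) ≠ 0 := pow_ne_zero _ (by norm_num)
      have h3 : (y⁻¹ : ℂ) ^ Fintype.card (Fin n) ≠ 0 := pow_ne_zero _ (inv_ne_zero hy)
      have h4 : (y : ℂ) ^ Fintype.card (Fin n) ≠ 0 := pow_ne_zero _ hy
      simp only [mul_eq_zero, h2, h3, h4, false_or]
  · haveI : Invertible (x • (1 : Matrix (Fin n) (Fin n) ℂ)) :=
      ⟨x⁻¹ • 1, by rw [Matrix.smul_mul, Matrix.one_mul, smul_smul, inv_mul_cancel₀ hx,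
        one_smul], by rw [Matrix.smul_mul, Matrix.one_mul, smul_smul,
        mul_inv_cancel₀ hx, one_smul]⟩
    have hinv : ⅟ (x • (1 : Matrix (Fin n) (Fin n) ℂ)) = x⁻¹ • 1 :=
      invOf_eq_right_inv (by rw [Matrix.smul_mul, Matrix.one_mul, smul_smul,
        mul_inv_cancel₀ hx, one_smul])
    rw [Matrix.det_fromBlocks₁₁, hinv]
    have h1 : C * (x⁻¹ • (1 : Matrix (Fin n) (Fin n) ℂ)) * B = x⁻¹ • (C * B) := by
      rw [Matrix.mul_smul, Matrix.mul_one, Matrix.smul_mul]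
    have h2 : (x * y) • (1 : Matrix (Fin n) (Fin n) ℂ) - C * B =
        x • (y • (1 : Matrix (Fin n) (Fin n) ℂ) - x⁻¹ • (C * B)) := by
      rw [smul_sub, smul_smul, smul_smul, mul_inv_cancel₀ hx, one_smul]
    rw [h1, h2, Matrix.det_smul, Matrix.det_smul, Matrix.det_one, mul_one]

/-- For the Hamiltonian matrix `H = [−α·I, Φ; Ψ, α·I]` regarded as a complex matrix,
`λ` is an eigenvalue of `H` iff `λ² − α²` is an eigenvalue of the complex matrix `ΨΦ`. -/
theorem hamiltonian_spectrum_iff (N : ℕ) (Φ Ψ : Matrix (Fin N) (Fin N) ℝ) (α : ℝ) (lam : ℂ) :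
    lam ∈ spectrum ℂ
        ((Matrix.fromBlocks ((-α) • (1 : Matrix (Fin N) (Fin N) ℝ)) Φ
            Ψ (α • (1 : Matrix (Fin N) (Fin N) ℝ))).map (Complex.ofReal ·)) ↔
      lam ^ 2 - (α : ℂ) ^ 2 ∈ spectrum ℂ ((Ψ * Φ).map (Complex.ofReal ·)) := by
  set Φc := Φ.map (Complex.ofReal ·) with hΦc
  set Ψc := Ψ.map (Complex.ofReal ·) with hΨc
  have hmul : (Ψ * Φ).map (Complex.ofReal ·) = Ψc * Φc := by
    ext i j
    simp [Matrix.mul_apply, Matrix.map_apply, hΦc, hΨc]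
  have hmap : (Matrix.fromBlocks ((-α) • (1 : Matrix (Fin N) (Fin N) ℝ)) Φ
        Ψ (α • (1 : Matrix (Fin N) (Fin N) ℝ))).map (Complex.ofReal ·) =
      Matrix.fromBlocks (((-α : ℝ) : ℂ) • 1) Φc Ψc (((α : ℝ) : ℂ) • 1) := by
    rw [Matrix.fromBlocks_map, map_smul_one_aux, map_smul_one_aux]
  rw [hmap, hmul, mem_spectrum_iff_det_aux, mem_spectrum_iff_det_aux]
  have hsub : lam • (1 : Matrix (Fin N ⊕ Fin N) (Fin N ⊕ Fin N) ℂ) -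
      Matrix.fromBlocks (((-α : ℝ) : ℂ) • 1) Φc Ψc (((α : ℝ) : ℂ) • 1) =
      Matrix.fromBlocks ((lam + α) • 1) (-Φc) (-Ψc) ((lam - α) • 1) := by
    rw [← Matrix.fromBlocks_one (l := Fin N) (m := Fin N), Matrix.fromBlocks_smul,
      sub_eq_add_neg, Matrix.fromBlocks_neg, Matrix.fromBlocks_add]
    simp only [smul_zero, zero_add, ← sub_eq_add_neg, zero_sub, ← sub_smul,
      Complex.ofReal_neg, sub_neg_eq_add]
  rw [hsub, det_blocks_scalar_aux]
  have : (lam + ↑α) * (lam - ↑α) = lam ^ 2 - (α : ℂ) ^ 2 := by ring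
  rw [this, neg_mul_neg]
end

section
/- Let Φ and Ψ be real symmetric positive definite N×N matrices and α ∈ ℝ, and let H be the 2N×2N block matrix [−α·I, Φ; Ψ, α·I], regarded as a complex matrix. Then H has no imaginary eigenvalues: every complex eigenvalue λ of H satisfies Im(λ) = 0 and λ ≠ 0. -/
open Matrix Complex
open scoped ComplexOrder

lemma map_smul_one_aux_s6 (N : ℕ) (c : ℝ) :
    ((c • (1 : Matrix (Fin N) (Fin N) ℝ)).map (Complex.ofReal ·))
      = (c : ℂ) • (1 : Matrix (Fin N) (Fin N) ℂ) := by
  ext i j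
  by_cases h : i = j <;> simp [Matrix.map_apply, Matrix.one_apply, h]

lemma posDef_map_ofReal {N : ℕ} {M : Matrix (Fin N) (Fin N) ℝ} (hM : M.PosDef) :
    (M.map (Complex.ofReal ·)).PosDef := by
  set Mc := M.map (Complex.ofReal ·) with hMc
  have hMcT : Mcᵀ = Mc := by
    have hMT : Mᵀ = M := hM.1
    rw [hMc, ← Matrix.transpose_map, hMT]
  rw [Matrix.posDef_iff_dotProduct_mulVec]
  constructor
  · exact hM.1.map _ (fun x => by simp [Complex.conj_ofReal])
  · intro z hz
    set u : Fin N → ℝ := fun i => (z i).re with hu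
    set w : Fin N → ℝ := fun i => (z i).im with hw
    set U : Fin N → ℂ := fun i => ((u i : ℝ) : ℂ) with hU
    set W : Fin N → ℂ := fun i => ((w i : ℝ) : ℂ) with hW
    have hzUW : z = U + Complex.I • W := by
      funext i; apply Complex.ext <;> simp [hU, hW, hu, hw]
    have hstarz : star z = U - Complex.I • W := by
      funext i; apply Complex.ext <;> simp [hU, hW, hu, hw]
    have hsym : U ⬝ᵥ (Mc *ᵥ W) = W ⬝ᵥ (Mc *ᵥ U) := by
      rw [Matrix.dotProduct_mulVec, ← Matrix.mulVec_transpose, hMcT,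
        dotProduct_comm]
    have hUU : U ⬝ᵥ (Mc *ᵥ U) = ((star u ⬝ᵥ (M *ᵥ u) : ℝ) : ℂ) := by
      have h1 : Complex.ofRealHom (u ⬝ᵥ (M *ᵥ u))
          = (Complex.ofRealHom ∘ u) ⬝ᵥ (Complex.ofRealHom ∘ (M *ᵥ u)) :=
        RingHom.map_dotProduct _ _ _
      have h2 : (Complex.ofRealHom ∘ (M *ᵥ u)) = Mc *ᵥ (Complex.ofRealHom ∘ u) :=
        funext fun i => RingHom.map_mulVec _ _ _ i
      rw [star_trivial]
      calc U ⬝ᵥ (Mc *ᵥ U) = (Complex.ofRealHom ∘ u) ⬝ᵥ (Mc *ᵥ (Complex.ofRealHom ∘ u)) := rfl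
        _ = ((u ⬝ᵥ (M *ᵥ u) : ℝ) : ℂ) := by rw [← h2, ← h1]; rfl
    have hWW : W ⬝ᵥ (Mc *ᵥ W) = ((star w ⬝ᵥ (M *ᵥ w) : ℝ) : ℂ) := by
      have h1 : Complex.ofRealHom (w ⬝ᵥ (M *ᵥ w))
          = (Complex.ofRealHom ∘ w) ⬝ᵥ (Complex.ofRealHom ∘ (M *ᵥ w)) :=
        RingHom.map_dotProduct _ _ _
      have h2 : (Complex.ofRealHom ∘ (M *ᵥ w)) = Mc *ᵥ (Complex.ofRealHom ∘ w) :=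
        funext fun i => RingHom.map_mulVec _ _ _ i
      rw [star_trivial]
      calc W ⬝ᵥ (Mc *ᵥ W) = (Complex.ofRealHom ∘ w) ⬝ᵥ (Mc *ᵥ (Complex.ofRealHom ∘ w)) := rfl
        _ = ((w ⬝ᵥ (M *ᵥ w) : ℝ) : ℂ) := by rw [← h2, ← h1]; rfl
    have hval : star z ⬝ᵥ (Mc *ᵥ z)
        = ((star u ⬝ᵥ (M *ᵥ u) + star w ⬝ᵥ (M *ᵥ w) : ℝ) : ℂ) := by
      rw [hstarz]
      conv_lhs => rw [hzUW]
      rw [Matrix.mulVec_add, Matrix.mulVec_smul, sub_dotProduct,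
        dotProduct_add, dotProduct_add, smul_dotProduct,
        smul_dotProduct, dotProduct_smul, dotProduct_smul]
      push_cast
      rw [← hUU, ← hWW]
      simp only [smul_eq_mul]
      rw [hsym]
      ring_nf
      rw [Complex.I_sq]
      ring
    rw [hval]
    have hne : u ≠ 0 ∨ w ≠ 0 := by
      by_contra h
      push_neg at h
      apply hz
      funext i
      have h1 := congrFun h.1 i
      have h2 := congrFun h.2 i
      simp [hu, hw] at h1 h2
      exact Complex.ext h1 h2
    have hupos : 0 ≤ star u ⬝ᵥ (M *ᵥ u) := hM.posSemidef.dotProduct_mulVec_nonneg u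
    have hwpos : 0 ≤ star w ⬝ᵥ (M *ᵥ w) := hM.posSemidef.dotProduct_mulVec_nonneg w
    rw [Complex.zero_lt_real]
    rcases hne with h | h
    · have := hM.dotProduct_mulVec_pos h; linarith
    · have := hM.dotProduct_mulVec_pos h; linarith

open Matrix Complex
open scoped ComplexOrder

/-- For symmetric positive definite `Φ, Ψ`, the Hamiltonian matrix
`H = [−α·I, Φ; Ψ, α·I]` has no imaginary eigenvalues: every complex eigenvalue `λ`
satisfies `Im(λ) = 0` and `λ ≠ 0`. -/
theorem hamiltonian_no_imaginary_eigenvalues (N : ℕ) (Φ Ψ : Matrix (Fin N) (Fin N) ℝ)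
    (hΦ : Φ.PosDef) (hΨ : Ψ.PosDef) (α : ℝ) (lam : ℂ)
    (hlam : lam ∈ spectrum ℂ
        ((Matrix.fromBlocks ((-α) • (1 : Matrix (Fin N) (Fin N) ℝ)) Φ
            Ψ (α • (1 : Matrix (Fin N) (Fin N) ℝ))).map (Complex.ofReal ·))) :
    lam.im = 0 ∧ lam ≠ 0 := by
  classical
  set Φc := Φ.map (Complex.ofReal ·) with hΦcdef
  set Ψc := Ψ.map (Complex.ofReal ·) with hΨcdef
  have hΦc : Φc.PosDef := posDef_map_ofReal hΦ
  have hΨc : Ψc.PosDef := posDef_map_ofReal hΨ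
  set Hc : Matrix (Fin N ⊕ Fin N) (Fin N ⊕ Fin N) ℂ :=
    Matrix.fromBlocks ((-(α : ℂ)) • 1) Φc Ψc ((α : ℂ) • 1) with hHcdef
  have hH : (Matrix.fromBlocks ((-α) • (1 : Matrix (Fin N) (Fin N) ℝ)) Φ
      Ψ (α • (1 : Matrix (Fin N) (Fin N) ℝ))).map (Complex.ofReal ·) = Hc := by
    rw [Matrix.fromBlocks_map, map_smul_one_aux_s6, map_smul_one_aux_s6, hHcdef]
    norm_cast
  rw [hH, spectrum.mem_iff] at hlam
  have hdet : (algebraMap ℂ (Matrix (Fin N ⊕ Fin N) (Fin N ⊕ Fin N) ℂ) lam - Hc).det = 0 := by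
    by_contra h
    exact hlam ((Matrix.isUnit_iff_isUnit_det _).mpr (isUnit_iff_ne_zero.mpr h))
  obtain ⟨v, hv0, hv⟩ := (Matrix.exists_mulVec_eq_zero_iff).mpr hdet
  have hv' : Hc *ᵥ v = lam • v := by
    rw [Algebra.algebraMap_eq_smul_one, Matrix.sub_mulVec, Matrix.smul_mulVec,
      Matrix.one_mulVec, sub_eq_zero] at hv
    exact hv.symm
  set x : Fin N → ℂ := fun i => v (Sum.inl i) with hxdef
  set y : Fin N → ℂ := fun i => v (Sum.inr i) with hydef
  have hvxy : v = Sum.elim x y := by funext i; cases i <;> rfl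
  rw [hvxy, Matrix.fromBlocks_mulVec, Matrix.smul_mulVec, Matrix.smul_mulVec,
    Matrix.one_mulVec, Matrix.one_mulVec] at hv'
  have h1 : Φc *ᵥ y = (lam + α) • x := by
    funext i
    have h := congrFun hv' (Sum.inl i)
    simp only [Sum.elim_inl, Sum.elim_inr, Sum.elim_comp_inl, Sum.elim_comp_inr,
      Pi.add_apply, Pi.smul_apply, smul_eq_mul] at h ⊢
    linear_combination h
  have h2 : Ψc *ᵥ x = (lam - α) • y := by
    funext i
    have h := congrFun hv' (Sum.inr i)
    simp only [Sum.elim_inl, Sum.elim_inr, Sum.elim_comp_inl, Sum.elim_comp_inr,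
      Pi.add_apply, Pi.smul_apply, smul_eq_mul] at h ⊢
    linear_combination h
  have key : ∀ (M : Matrix (Fin N) (Fin N) ℂ), M.PosDef → ∀ z, M *ᵥ z = 0 → z = 0 := by
    intro M hM z hz
    by_contra h
    have := hM.dotProduct_mulVec_pos h
    rw [hz] at this
    simp at this
  have hx0 : x ≠ 0 := by
    intro h
    have hy' : y = 0 := by
      apply key Φc hΦc
      rw [h1, h, smul_zero]
    apply hv0
    rw [hvxy, h, hy']
    funext i; cases i <;> rfl
  have hy0 : y ≠ 0 := by
    intro h
    apply hx0
    apply key Ψc hΨc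
    rw [h2, h, smul_zero]
  set s : ℂ := star y ⬝ᵥ x with hsdef
  set a : ℂ := star y ⬝ᵥ (Φc *ᵥ y) with hadef
  set b : ℂ := star x ⬝ᵥ (Ψc *ᵥ x) with hbdef
  have ha : 0 < a := hΦc.dotProduct_mulVec_pos hy0
  have hb : 0 < b := hΨc.dotProduct_mulVec_pos hx0
  have ha_re : 0 < a.re := by simpa using (Complex.lt_def.mp ha).1
  have hb_re : 0 < b.re := by simpa using (Complex.lt_def.mp hb).1
  have ha_im : a.im = 0 := by simpa using (Complex.lt_def.mp ha).2.symm
  have hb_im : b.im = 0 := by simpa using (Complex.lt_def.mp hb).2.symm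
  have haconj : (starRingEnd ℂ) a = a := Complex.conj_eq_iff_im.mpr ha_im
  have hbconj : (starRingEnd ℂ) b = b := Complex.conj_eq_iff_im.mpr hb_im
  have hA : a = (lam + α) * s := by
    rw [hadef, h1, dotProduct_smul, smul_eq_mul, hsdef]
  have hxy : star x ⬝ᵥ y = (starRingEnd ℂ) s := by
    rw [hsdef]
    simp [dotProduct, map_sum, mul_comm]
  have hB : b = (lam - α) * (starRingEnd ℂ) s := by
    rw [hbdef, h2, dotProduct_smul, smul_eq_mul, hxy]
  have h2' : ((starRingEnd ℂ) lam - α) * s = b := by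
    have h := congrArg (starRingEnd ℂ) hB
    simp only [_root_.map_mul, _root_.map_sub, Complex.conj_ofReal, Complex.conj_conj,
      hbconj] at h
    linear_combination -h
  have hsum : (lam + (starRingEnd ℂ) lam) * s = a + b := by
    linear_combination h2' - hA
  have hab : a + b ≠ 0 := by
    intro h
    have := congrArg Complex.re h
    simp at this
    linarith
  have hmul : (lam + (starRingEnd ℂ) lam) * s ≠ 0 := hsum ▸ hab
  have hlne : lam + (starRingEnd ℂ) lam ≠ 0 := left_ne_zero_of_mul hmul
  have hs_ne : s ≠ 0 := right_ne_zero_of_mul hmul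
  have hlam0 : lam ≠ 0 := by rintro rfl; simp at hlne
  have hsum' : (lam + (starRingEnd ℂ) lam) * (starRingEnd ℂ) s = a + b := by
    have h := congrArg (starRingEnd ℂ) hsum
    simp only [_root_.map_mul, _root_.map_add, Complex.conj_conj, haconj, hbconj] at h
    linear_combination h
  have hsconj : (starRingEnd ℂ) s = s := mul_left_cancel₀ hlne (hsum'.trans hsum.symm)
  have hA' : ((starRingEnd ℂ) lam + α) * s = a := by
    have h := congrArg (starRingEnd ℂ) hA
    simp only [_root_.map_mul, _root_.map_add, Complex.conj_ofReal, Complex.conj_conj,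
      haconj, hsconj] at h
    linear_combination -h
  have hcl : (starRingEnd ℂ) lam = lam := by
    have h' := mul_right_cancel₀ hs_ne (hA'.trans hA)
    exact add_right_cancel h'
  exact ⟨Complex.conj_eq_iff_im.mp hcl, hlam0⟩
end

section
/- Let Φ and Ψ be real symmetric positive definite N×N matrices and α ∈ ℝ, and define F(Λ) = α·log(det Λ) − (1/2)·(Tr(ΨΛ⁻¹) + Tr(ΦΛ)) on symmetric positive definite matrices. Then there exists a symmetric positive definite matrix Λ* such that Λ*ΦΛ* − 2αΛ* − Ψ = 0 and F(Λ) < F(Λ*) for every symmetric positive definite matrix Λ ≠ Λ*; in particular F has a unique global maximizer on the symmetric positive definite matrices (the MGIG density is unimodal). -/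
open Matrix Finset

namespace MGIGaux

variable {n : Type*} [Fintype n] [DecidableEq n]

lemma posDef_conj {A B : Matrix n n ℝ} (hA : A.PosDef) (hB : IsUnit B.det) :
    (Bᴴ * A * B).PosDef := by
  refine PosDef.of_dotProduct_mulVec_pos (isHermitian_conjTranspose_mul_mul B hA.1) fun x hx => ?_
  have hx' : B *ᵥ x ≠ 0 := by
    intro h
    apply hx
    have h2 := congrArg (fun y => B⁻¹ *ᵥ y) h
    simpa [Matrix.mulVec_mulVec, Matrix.nonsing_inv_mul B hB] using h2
  simpa only [star_mulVec, dotProduct_mulVec, vecMul_vecMul] using hA.dotProduct_mulVec_pos hx'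

lemma diag_pos {A : Matrix n n ℝ} (hA : A.PosDef) (i : n) : 0 < A i i := by
  have h := hA.dotProduct_mulVec_pos (x := Pi.single i 1) (by
    intro h; simpa using congrFun h i)
  simpa [dotProduct, Matrix.mulVec, Pi.single_apply] using h

section fc

variable {A : Matrix n n ℝ} (hA : A.IsHermitian)

/-- unitary of the spectral decomposition, as a plain matrix -/
noncomputable def U : Matrix n n ℝ := (hA.eigenvectorUnitary : Matrix n n ℝ)

/-- "functional calculus": `U * diagonal d * Uᴴ` -/
noncomputable def fc (d : n → ℝ) : Matrix n n ℝ := U hA * diagonal d * (U hA)ᴴ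

lemma U_mul_star : U hA * (U hA)ᴴ = 1 := by
  have := Matrix.mem_unitaryGroup_iff.mp hA.eigenvectorUnitary.2
  simpa [U, Matrix.star_eq_conjTranspose] using this

lemma star_mul_U : (U hA)ᴴ * U hA = 1 := by
  have := Matrix.mem_unitaryGroup_iff'.mp hA.eigenvectorUnitary.2
  simpa [U, Matrix.star_eq_conjTranspose] using this

lemma isUnit_det_U : IsUnit (U hA).det := by
  have h := congrArg Matrix.det (U_mul_star hA)
  rw [Matrix.det_mul, Matrix.det_one] at h
  exact IsUnit.of_mul_eq_one _ h

lemma fc_eigenvalues : fc hA hA.eigenvalues = A := by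
  have := hA.spectral_theorem
  simp only [Unitary.conjStarAlgAut_apply, Matrix.star_eq_conjTranspose] at this
  simpa [fc, U] using this.symm

lemma fc_mul (d e : n → ℝ) : fc hA d * fc hA e = fc hA (fun i => d i * e i) := by
  simp only [fc]
  rw [show U hA * diagonal d * (U hA)ᴴ * (U hA * diagonal e * (U hA)ᴴ)
      = U hA * diagonal d * ((U hA)ᴴ * U hA) * diagonal e * (U hA)ᴴ by
        simp only [Matrix.mul_assoc], star_mul_U hA]
  simp [Matrix.mul_assoc, diagonal_mul_diagonal]

lemma fc_add (d e : n → ℝ) : fc hA d + fc hA e = fc hA (fun i => d i + e i) := by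
  simp only [fc, ← diagonal_add, Matrix.add_mul, Matrix.mul_add]

lemma fc_sub (d e : n → ℝ) : fc hA d - fc hA e = fc hA (fun i => d i - e i) := by
  simp only [fc, ← diagonal_sub, Matrix.sub_mul, Matrix.mul_sub]

lemma fc_smul (c : ℝ) (d : n → ℝ) : c • fc hA d = fc hA (fun i => c * d i) := by
  simp only [fc]
  rw [show (diagonal fun i => c * d i) = c • diagonal d by
    ext i j; by_cases h : i = j <;> simp [diagonal, h]]
  simp [Matrix.mul_smul, Matrix.smul_mul]

lemma fc_one : fc hA (fun _ => 1) = 1 := by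
  simp only [fc, diagonal_one, Matrix.mul_one]
  exact U_mul_star hA

lemma fc_isHermitian (d : n → ℝ) : (fc hA d).IsHermitian := by
  simp only [fc, Matrix.IsHermitian, conjTranspose_mul, conjTranspose_conjTranspose,
    diagonal_conjTranspose]
  simp [Matrix.mul_assoc, star_trivial]

lemma fc_posDef (d : n → ℝ) (hd : ∀ i, 0 < d i) : (fc hA d).PosDef := by
  have h1 : (Matrix.diagonal d).PosDef := Matrix.PosDef.diagonal hd
  have := posDef_conj (B := (U hA)ᴴ) h1 (by
    have h := congrArg Matrix.det (U_mul_star hA)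
    rw [Matrix.det_mul, Matrix.det_one] at h
    exact IsUnit.of_mul_eq_one _ (by rwa [mul_comm] at h))
  simpa [fc, conjTranspose_conjTranspose] using this

lemma fc_inv (d : n → ℝ) (hd : ∀ i, d i ≠ 0) : (fc hA d)⁻¹ = fc hA (fun i => (d i)⁻¹) := by
  apply Matrix.inv_eq_right_inv
  rw [fc_mul]
  have : (fun i => d i * (d i)⁻¹) = fun _ => (1:ℝ) := by
    funext i; exact mul_inv_cancel₀ (hd i)
  rw [this, fc_one]

lemma fc_det (d : n → ℝ) : (fc hA d).det = ∏ i, d i := by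
  have h := congrArg Matrix.det (U_mul_star hA)
  rw [Matrix.det_mul, Matrix.det_one] at h
  simp only [fc, Matrix.det_mul, Matrix.det_diagonal]
  rw [mul_right_comm, h, one_mul]

lemma fc_trace_mul (P : Matrix n n ℝ) (d : n → ℝ) :
    (P * fc hA d).trace = ∑ i, d i * ((U hA)ᴴ * P * U hA) i i := by
  have : P * fc hA d = P * U hA * diagonal d * (U hA)ᴴ := by
    simp [fc, Matrix.mul_assoc]
  rw [this]
  rw [show P * U hA * diagonal d * (U hA)ᴴ = (P * U hA * diagonal d) * (U hA)ᴴ from rfl,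
    Matrix.trace_mul_comm, ← Matrix.mul_assoc, ← Matrix.mul_assoc]
  simp [Matrix.trace, Matrix.diag, Matrix.mul_diagonal, mul_comm]

lemma fc_trace (d : n → ℝ) : (fc hA d).trace = ∑ i, d i := by
  have h := fc_trace_mul hA 1 d
  rw [Matrix.one_mul] at h
  rw [h]
  congr 1
  funext i
  rw [Matrix.mul_one, show ((U hA)ᴴ * U hA) = 1 from star_mul_U hA]
  simp

end fc

end MGIGaux
namespace MGIGaux

variable {n : Type*} [Fintype n] [DecidableEq n]

lemma exists_sqrt {A : Matrix n n ℝ} (hA : A.PosDef) :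
    ∃ S : Matrix n n ℝ, S.PosDef ∧ S * S = A := by
  refine ⟨fc hA.1 (fun i => Real.sqrt (hA.1.eigenvalues i)),
    fc_posDef _ _ (fun i => Real.sqrt_pos.mpr (hA.eigenvalues_pos i)), ?_⟩
  rw [fc_mul]
  have : (fun i => Real.sqrt (hA.1.eigenvalues i) * Real.sqrt (hA.1.eigenvalues i))
      = hA.1.eigenvalues := by
    funext i; exact Real.mul_self_sqrt (hA.eigenvalues_pos i).le
  rw [this, fc_eigenvalues]

lemma exists_riccati {C : Matrix n n ℝ} (hC : C.PosDef) (α : ℝ) :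
    ∃ X : Matrix n n ℝ, X.PosDef ∧ X * X - (2 * α) • X = C := by
  set ev := hC.1.eigenvalues with hev
  refine ⟨fc hC.1 (fun i => α + Real.sqrt (α ^ 2 + ev i)), fc_posDef _ _ (fun i => ?_), ?_⟩
  · have h1 : |α| < Real.sqrt (α ^ 2 + ev i) := by
      rw [show |α| = Real.sqrt (α ^ 2) by rw [Real.sqrt_sq_eq_abs]]
      exact Real.sqrt_lt_sqrt (sq_nonneg α) (by linarith [hC.eigenvalues_pos i])
    have := neg_abs_le α
    linarith
  · rw [fc_mul, fc_smul, fc_sub]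
    have : (fun i => (α + Real.sqrt (α ^ 2 + ev i)) * (α + Real.sqrt (α ^ 2 + ev i))
        - 2 * α * (α + Real.sqrt (α ^ 2 + ev i))) = ev := by
      funext i
      have hs : Real.sqrt (α ^ 2 + ev i) * Real.sqrt (α ^ 2 + ev i) = α ^ 2 + ev i :=
        Real.mul_self_sqrt (add_nonneg (sq_nonneg α) (hC.eigenvalues_pos i).le)
      ring_nf
      ring_nf at hs
      nlinarith [hs]
    rw [this, fc_eigenvalues]

/-- key strict positivity: for `P ≻ 0`, `M ≻ 0`, `M ≠ 1`, `tr(P(M + M⁻¹ - 2)) > 0`. -/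
lemma key_pos {P M : Matrix n n ℝ} (hP : P.PosDef) (hM : M.PosDef) (hne : M ≠ 1) :
    0 < (P * M).trace + (P * M⁻¹).trace - 2 * P.trace := by
  set ev := hM.1.eigenvalues with hev
  have hpos : ∀ i, 0 < ev i := hM.eigenvalues_pos
  have hMfc : M = fc hM.1 ev := (fc_eigenvalues hM.1).symm
  have hMinv : M⁻¹ = fc hM.1 (fun i => (ev i)⁻¹) := by
    have h := fc_inv hM.1 ev (fun i => (hpos i).ne')
    rw [← hMfc] at h
    exact h
  have hPtr : P.trace = (P * fc hM.1 (fun _ => 1)).trace := by rw [fc_one, Matrix.mul_one]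
  -- the congruated matrix has positive diagonal
  have hQ : ((U hM.1)ᴴ * P * U hM.1).PosDef := posDef_conj hP (isUnit_det_U hM.1)
  set c : n → ℝ := fun i => ((U hM.1)ᴴ * P * U hM.1) i i with hc
  have hcpos : ∀ i, 0 < c i := fun i => diag_pos hQ i
  have e1 : (P * M).trace = ∑ i, ev i * c i := by rw [hMfc, fc_trace_mul]
  have e2 : (P * M⁻¹).trace = ∑ i, (ev i)⁻¹ * c i := by rw [hMinv, fc_trace_mul]
  have e3 : P.trace = ∑ i, 1 * c i := by rw [hPtr, fc_trace_mul]
  rw [e1, e2, e3]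
  rw [← Finset.sum_add_distrib, Finset.mul_sum, ← Finset.sum_sub_distrib]
  have hterm : ∀ i ∈ Finset.univ, (0:ℝ) ≤ ev i * c i + (ev i)⁻¹ * c i - 2 * (1 * c i) := by
    intro i _
    have h1 : (0:ℝ) ≤ ev i + (ev i)⁻¹ - 2 := by
      have h0 : ev i ≠ 0 := (hpos i).ne'
      have h2 : ev i + (ev i)⁻¹ - 2 = (ev i - 1) ^ 2 / ev i := by
        field_simp; ring
      rw [h2]; exact div_nonneg (sq_nonneg _) (hpos i).le
    have := hcpos i
    nlinarith
  -- some eigenvalue differs from 1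
  have hex : ∃ i, ev i ≠ 1 := by
    by_contra h
    push_neg at h
    apply hne
    rw [hMfc, show ev = fun _ => (1:ℝ) from funext h, fc_one]
  obtain ⟨j, hj⟩ := hex
  apply Finset.sum_pos' hterm
  refine ⟨j, Finset.mem_univ j, ?_⟩
  have h1 : (0:ℝ) < ev j + (ev j)⁻¹ - 2 := by
    have h0 : ev j ≠ 0 := (hpos j).ne'
    have h2 : ev j + (ev j)⁻¹ - 2 = (ev j - 1) ^ 2 / ev j := by
      field_simp; ring
    rw [h2]
    have hsq : (0:ℝ) < (ev j - 1) ^ 2 :=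
      lt_of_le_of_ne (sq_nonneg _) (Ne.symm (pow_ne_zero 2 (sub_ne_zero.mpr hj)))
    exact div_pos hsq (hpos j)
  have := hcpos j
  nlinarith

end MGIGaux
namespace MGIGaux

variable {n : Type*} [Fintype n] [DecidableEq n]

lemma eig_data {M : Matrix n n ℝ} (hM : M.PosDef) :
    ∃ ev : n → ℝ, (∀ i, 0 < ev i) ∧ Real.log M.det = ∑ i, Real.log (ev i) ∧
      M.trace = ∑ i, ev i ∧ M⁻¹.trace = ∑ i, (ev i)⁻¹ := by
  set ev := hM.1.eigenvalues with hev
  have hpos : ∀ i, 0 < ev i := hM.eigenvalues_pos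
  have hMfc : M = fc hM.1 ev := (fc_eigenvalues hM.1).symm
  have hdet : M.det = ∏ i, ev i := by rw [hMfc, fc_det]
  have hMinv : M⁻¹ = fc hM.1 (fun i => (ev i)⁻¹) := by
    have h := fc_inv hM.1 ev (fun i => (hpos i).ne')
    rw [← hMfc] at h
    exact h
  refine ⟨ev, hpos, ?_, ?_, ?_⟩
  · rw [hdet, Real.log_prod (fun i _ => (hpos i).ne')]
  · rw [hMfc, fc_trace]
  · rw [hMinv, fc_trace]

lemma log_det_le {M : Matrix n n ℝ} (hM : M.PosDef) :
    Real.log M.det ≤ M.trace - (Fintype.card n : ℝ) := by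
  obtain ⟨ev, hpos, h1, h2, _⟩ := eig_data hM
  rw [h1, h2, show ((Fintype.card n : ℝ)) = ∑ _i : n, (1:ℝ) by simp, ← Finset.sum_sub_distrib]
  exact Finset.sum_le_sum fun i _ => by
    have := Real.log_le_sub_one_of_pos (hpos i); linarith

lemma log_det_ge {M : Matrix n n ℝ} (hM : M.PosDef) :
    (Fintype.card n : ℝ) - M⁻¹.trace ≤ Real.log M.det := by
  obtain ⟨ev, hpos, h1, _, h3⟩ := eig_data hM
  rw [h1, h3, show ((Fintype.card n : ℝ)) = ∑ _i : n, (1:ℝ) by simp, ← Finset.sum_sub_distrib]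
  exact Finset.sum_le_sum fun i _ => by
    have h := Real.log_le_sub_one_of_pos (inv_pos.mpr (hpos i))
    rw [Real.log_inv] at h; linarith

end MGIGaux
/-- The MGIG log-density `F(Λ) = α·log(det Λ) − (1/2)·(Tr(ΨΛ⁻¹) + Tr(ΦΛ))` has a unique
global maximizer on the symmetric positive definite matrices, and this maximizer solves
the Algebraic Riccati Equation `ΛΦΛ − 2αΛ − Ψ = 0` (the MGIG distribution is unimodal). -/
theorem mgig_unimodal (N : ℕ) (Φ Ψ : Matrix (Fin N) (Fin N) ℝ)
    (hΦ : Φ.PosDef) (hΨ : Ψ.PosDef) (α : ℝ) :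
    ∃ Λstar : Matrix (Fin N) (Fin N) ℝ, Λstar.PosDef ∧
      Λstar * Φ * Λstar - (2 * α) • Λstar - Ψ = 0 ∧
      ∀ Λ : Matrix (Fin N) (Fin N) ℝ, Λ.PosDef → Λ ≠ Λstar →
        α * Real.log Λ.det - (1 / 2) * ((Ψ * Λ⁻¹).trace + (Φ * Λ).trace) <
          α * Real.log Λstar.det - (1 / 2) * ((Ψ * Λstar⁻¹).trace + (Φ * Λstar).trace) := by
  classical
  obtain ⟨S, hS, hSS⟩ := MGIGaux.exists_sqrt hΦ
  have hSdet : IsUnit S.det := isUnit_iff_ne_zero.mpr hS.det_pos.ne'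
  have hSH : Sᴴ = S := hS.1
  have hSidet : IsUnit S⁻¹.det := by
    rw [Matrix.det_nonsing_inv, Ring.inverse_eq_inv]
    exact isUnit_iff_ne_zero.mpr (inv_ne_zero hS.det_pos.ne')
  have hSiH : (S⁻¹)ᴴ = S⁻¹ := by rw [Matrix.conjTranspose_nonsing_inv, hSH]
  have hC : (S * Ψ * S).PosDef := by
    have h := MGIGaux.posDef_conj hΨ hSdet
    rwa [hSH] at h
  obtain ⟨X, hX, hXeq⟩ := MGIGaux.exists_riccati hC α
  obtain ⟨Λstar, hΛdef⟩ : ∃ L : Matrix (Fin N) (Fin N) ℝ, L = S⁻¹ * X * S⁻¹ := ⟨_, rfl⟩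
  have hΛ : Λstar.PosDef := by
    rw [hΛdef]
    have h := MGIGaux.posDef_conj hX hSidet
    rwa [hSiH] at h
  have hRic : Λstar * Φ * Λstar - (2 * α) • Λstar - Ψ = 0 := by
    have h1 : Λstar * Φ * Λstar = S⁻¹ * (X * X) * S⁻¹ := by
      rw [hΛdef, ← hSS]
      simp only [Matrix.mul_assoc, Matrix.nonsing_inv_mul_cancel_left _ _ hSdet,
        Matrix.mul_nonsing_inv_cancel_left _ _ hSdet]
    have h2 : (2 * α) • Λstar = S⁻¹ * ((2 * α) • X) * S⁻¹ := by
      rw [hΛdef]; simp [Matrix.mul_smul, Matrix.smul_mul]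
    have h3 : Ψ = S⁻¹ * (S * Ψ * S) * S⁻¹ := by
      simp only [Matrix.mul_assoc, Matrix.nonsing_inv_mul_cancel_left _ _ hSdet,
        Matrix.mul_nonsing_inv S hSdet, Matrix.mul_one]
    rw [h1, h2]
    nth_rewrite 1 [h3]
    rw [show S⁻¹ * (X * X) * S⁻¹ - S⁻¹ * ((2 * α) • X) * S⁻¹ - S⁻¹ * (S * Ψ * S) * S⁻¹
        = S⁻¹ * (X * X - (2 * α) • X - S * Ψ * S) * S⁻¹ by
      simp only [Matrix.mul_sub, Matrix.sub_mul]]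
    rw [hXeq]
    simp
  refine ⟨Λstar, hΛ, hRic, fun Λ hΛp hΛne => ?_⟩
  -- square root of Λstar
  obtain ⟨B, hB, hBB⟩ := MGIGaux.exists_sqrt hΛ
  have hBdet : IsUnit B.det := isUnit_iff_ne_zero.mpr hB.det_pos.ne'
  have hBH : Bᴴ = B := hB.1
  have hBidet : IsUnit B⁻¹.det := by
    rw [Matrix.det_nonsing_inv, Ring.inverse_eq_inv]
    exact isUnit_iff_ne_zero.mpr (inv_ne_zero hB.det_pos.ne')
  have hBiH : (B⁻¹)ᴴ = B⁻¹ := by rw [Matrix.conjTranspose_nonsing_inv, hBH]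
  obtain ⟨M, hMdef⟩ : ∃ M : Matrix (Fin N) (Fin N) ℝ, M = B⁻¹ * Λ * B⁻¹ := ⟨_, rfl⟩
  have hM : M.PosDef := by
    rw [hMdef]
    have h := MGIGaux.posDef_conj hΛp hBidet
    rwa [hBiH] at h
  have hΛBMB : Λ = B * M * B := by
    rw [hMdef]
    simp only [Matrix.mul_assoc, Matrix.mul_nonsing_inv_cancel_left _ _ hBdet,
      Matrix.nonsing_inv_mul B hBdet, Matrix.mul_one]
  have hMne : M ≠ 1 := by
    intro h
    apply hΛne
    rw [hΛBMB, h, Matrix.mul_one, hBB]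
  obtain ⟨P, hPdef⟩ : ∃ P : Matrix (Fin N) (Fin N) ℝ, P = B⁻¹ * Ψ * B⁻¹ := ⟨_, rfl⟩
  have hP : P.PosDef := by
    rw [hPdef]
    have h := MGIGaux.posDef_conj hΨ hBidet
    rwa [hBiH] at h
  have hQ : (B * Φ * B).PosDef := by
    have h := MGIGaux.posDef_conj hΦ hBdet
    rwa [hBH] at h
  have hRic' : Λstar * Φ * Λstar = (2 * α) • Λstar + Ψ := by
    have h := hRic
    rw [sub_sub, sub_eq_zero] at h
    exact h
  have hQrel : B * Φ * B = (2 * α) • 1 + P := by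
    have h1 : B⁻¹ * (Λstar * Φ * Λstar) * B⁻¹ = B * Φ * B := by
      rw [← hBB]
      simp only [Matrix.mul_assoc, Matrix.nonsing_inv_mul_cancel_left _ _ hBdet,
        Matrix.mul_nonsing_inv_cancel_left _ _ hBdet,
        Matrix.mul_nonsing_inv B hBdet, Matrix.mul_one]
    have h2 : B⁻¹ * ((2 * α) • Λstar + Ψ) * B⁻¹ = (2 * α) • 1 + P := by
      rw [← hBB, hPdef]
      simp only [Matrix.mul_add, Matrix.add_mul, Matrix.mul_smul, Matrix.smul_mul]
      congr 2
      simp only [Matrix.mul_assoc, Matrix.nonsing_inv_mul_cancel_left _ _ hBdet,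
        Matrix.mul_nonsing_inv B hBdet]
    rw [← h1, hRic', h2]
  have hdetB := hB.det_pos
  have hdetM := hM.det_pos
  have g1 : Real.log Λ.det = Real.log M.det + Real.log Λstar.det := by
    have hdetΛ : Λ.det = B.det * M.det * B.det := by
      rw [hΛBMB, Matrix.det_mul, Matrix.det_mul]
    have hdetΛs : Λstar.det = B.det * B.det := by rw [← hBB, Matrix.det_mul]
    rw [hdetΛ, hdetΛs, Real.log_mul (by positivity) hdetB.ne',
      Real.log_mul hdetB.ne' hdetM.ne', Real.log_mul hdetB.ne' hdetB.ne']
    ring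
  have g2 : (Ψ * Λ⁻¹).trace = (P * M⁻¹).trace := by
    rw [hΛBMB, Matrix.mul_inv_rev, Matrix.mul_inv_rev, hPdef]
    rw [show Ψ * (B⁻¹ * (M⁻¹ * B⁻¹)) = Ψ * B⁻¹ * M⁻¹ * B⁻¹ by
      simp only [Matrix.mul_assoc]]
    rw [Matrix.trace_mul_cycle]
    simp only [Matrix.mul_assoc]
  have g3 : (Φ * Λ).trace = (P * M).trace + 2 * α * M.trace := by
    rw [hΛBMB]
    rw [show Φ * (B * M * B) = Φ * B * M * B by simp only [Matrix.mul_assoc]]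
    rw [Matrix.trace_mul_cycle, show B * (Φ * B) * M = (B * Φ * B) * M by
      simp only [Matrix.mul_assoc], hQrel]
    rw [Matrix.add_mul, Matrix.trace_add, Matrix.smul_mul, Matrix.one_mul,
      Matrix.trace_smul]
    simp only [smul_eq_mul]
    ring
  have g4 : (Ψ * Λstar⁻¹).trace = P.trace := by
    rw [← hBB, Matrix.mul_inv_rev, hPdef]
    rw [show Ψ * (B⁻¹ * B⁻¹) = Ψ * B⁻¹ * B⁻¹ by simp only [Matrix.mul_assoc]]
    rw [Matrix.trace_mul_cycle]
  have g5 : (Φ * Λstar).trace = P.trace + 2 * α * (N : ℝ) := by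
    rw [← hBB]
    rw [show Φ * (B * B) = Φ * B * B by simp only [Matrix.mul_assoc]]
    rw [Matrix.trace_mul_cycle, hQrel]
    rw [Matrix.trace_add, Matrix.trace_smul, Matrix.trace_one]
    simp only [smul_eq_mul, Fintype.card_fin]
    ring
  have K1 : 0 < (P * M).trace + (P * M⁻¹).trace - 2 * P.trace :=
    MGIGaux.key_pos hP hM hMne
  have K2 : 0 < ((B * Φ * B) * M).trace + ((B * Φ * B) * M⁻¹).trace - 2 * (B * Φ * B).trace :=
    MGIGaux.key_pos hQ hM hMne
  have K2' : 0 < (P * M).trace + (P * M⁻¹).trace - 2 * P.trace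
      + 2 * α * M.trace + 2 * α * M⁻¹.trace - 4 * α * (N : ℝ) := by
    have e1 : ((B * Φ * B) * M).trace = 2 * α * M.trace + (P * M).trace := by
      rw [hQrel, Matrix.add_mul, Matrix.trace_add, Matrix.smul_mul, Matrix.one_mul,
        Matrix.trace_smul]
      simp only [smul_eq_mul]
    have e2 : ((B * Φ * B) * M⁻¹).trace = 2 * α * M⁻¹.trace + (P * M⁻¹).trace := by
      rw [hQrel, Matrix.add_mul, Matrix.trace_add, Matrix.smul_mul, Matrix.one_mul,
        Matrix.trace_smul]
      simp only [smul_eq_mul]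
    have e3 : (B * Φ * B).trace = 2 * α * (N : ℝ) + P.trace := by
      rw [hQrel, Matrix.trace_add, Matrix.trace_smul, Matrix.trace_one]
      simp only [smul_eq_mul, Fintype.card_fin]
    rw [e1, e2, e3] at K2
    linarith
  have hcard : (Fintype.card (Fin N) : ℝ) = (N : ℝ) := by simp
  rw [g1, g2, g3, g4, g5]
  rcases le_or_gt 0 α with hα | hα
  · have S1 : Real.log M.det ≤ M.trace - (N : ℝ) := by
      have h := MGIGaux.log_det_le hM
      rwa [hcard] at h
    have hb : α * Real.log M.det ≤ α * (M.trace - (N : ℝ)) :=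
      mul_le_mul_of_nonneg_left S1 hα
    have hb' : α * Real.log M.det - α * M.trace + α * (N : ℝ) ≤ 0 := by
      have : α * (M.trace - (N : ℝ)) = α * M.trace - α * (N : ℝ) := by ring
      linarith [hb, this ▸ hb]
    linarith [K1, hb']
  · have S2 : 0 ≤ Real.log M.det + M⁻¹.trace - (N : ℝ) := by
      have h := MGIGaux.log_det_ge hM
      rw [hcard] at h
      linarith
    have hb : α * (Real.log M.det + M⁻¹.trace - (N : ℝ)) ≤ 0 :=
      mul_nonpos_of_nonpos_of_nonneg hα.le S2
    have hb' : α * Real.log M.det + α * M⁻¹.trace - α * (N : ℝ) ≤ 0 := by nlinarith [hb]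
    linarith [K2', hb']
end

section
/- Let N, M, D ≥ 1, let X be a real N×M matrix with columns x₁,…,x_M, let U be a real N×D matrix, and let σ_u, σ_v, β_v > 0. Set Λ_u = β_v·I_N + UUᵀ, Ψ_u = (1/σ_v²)·XXᵀ, and Φ_u = (1/σ_u²)·I_N. Then (det Λ_u)^{−M/2} · exp(−(1/(2σ_v²))·Σ_{m=1}^{M} x_mᵀ Λ_u⁻¹ x_m) · exp(−(1/(2σ_u²))·Tr(UUᵀ)) = exp(N·β_v/(2σ_u²)) · (det Λ_u)^{−M/2} · exp(−(1/2)·Tr(Ψ_u Λ_u⁻¹ + Φ_u Λ_u)). -/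
open Matrix

/-- After marginalizing the latent factor `V` in probabilistic matrix factorization, the
posterior over `U`, as a function of `Λ_u = β_v·I + UUᵀ`, is proportional to the MGIG
kernel with parameters `Ψ_u = XXᵀ/σ_v²`, `Φ_u = I/σ_u²`. -/
theorem pmf_posterior_is_mgig_kernel (N M D : ℕ) (hN : 1 ≤ N) (hM : 1 ≤ M) (hD : 1 ≤ D)
    (X : Matrix (Fin N) (Fin M) ℝ) (U : Matrix (Fin N) (Fin D) ℝ)
    (σu σv βv : ℝ) (hσu : 0 < σu) (hσv : 0 < σv) (hβv : 0 < βv)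
    (Λu Ψu Φu : Matrix (Fin N) (Fin N) ℝ)
    (hΛu : Λu = βv • (1 : Matrix (Fin N) (Fin N) ℝ) + U * Uᵀ)
    (hΨu : Ψu = (σv ^ 2)⁻¹ • (X * Xᵀ))
    (hΦu : Φu = (σu ^ 2)⁻¹ • (1 : Matrix (Fin N) (Fin N) ℝ)) :
    Λu.det ^ (-(M : ℝ) / 2) *
        Real.exp (-(1 / (2 * σv ^ 2)) * ∑ m : Fin M, Xᵀ m ⬝ᵥ Λu⁻¹.mulVec (Xᵀ m)) *
        Real.exp (-(1 / (2 * σu ^ 2)) * (U * Uᵀ).trace) =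
      Real.exp ((N : ℝ) * βv / (2 * σu ^ 2)) * Λu.det ^ (-(M : ℝ) / 2) *
        Real.exp (-(1 / 2) * (Ψu * Λu⁻¹ + Φu * Λu).trace) := by
  have hσu0 : σu ^ 2 ≠ 0 := by positivity
  have hσv0 : σv ^ 2 ≠ 0 := by positivity
  have hS : ∑ m : Fin M, Xᵀ m ⬝ᵥ Λu⁻¹.mulVec (Xᵀ m) = (X * Xᵀ * Λu⁻¹).trace := by
    rw [Matrix.mul_assoc, Matrix.trace_mul_comm]
    simp only [Matrix.trace, Matrix.diag_apply, Matrix.mul_apply, dotProduct,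
      Matrix.mulVec, Matrix.transpose_apply, Finset.mul_sum, Finset.sum_mul]
    refine Finset.sum_congr rfl fun m _ => ?_
    rw [Finset.sum_comm]
    refine Finset.sum_congr rfl fun i _ => Finset.sum_congr rfl fun j _ => ?_
    ring
  have hT : Λu.trace = (N : ℝ) * βv + (U * Uᵀ).trace := by
    simp [hΛu, Matrix.trace_smul, Matrix.trace_one, mul_comm]
  have htr : (Ψu * Λu⁻¹ + Φu * Λu).trace
      = (σv ^ 2)⁻¹ * (X * Xᵀ * Λu⁻¹).trace + (σu ^ 2)⁻¹ * ((N : ℝ) * βv + (U * Uᵀ).trace) := by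
    rw [Matrix.trace_add, hΨu, hΦu, Matrix.smul_mul, Matrix.smul_mul, Matrix.one_mul,
      Matrix.trace_smul, Matrix.trace_smul, hT]
    simp [smul_eq_mul]
  rw [hS, htr, mul_comm (Real.exp ((N : ℝ) * βv / (2 * σu ^ 2))), mul_assoc, mul_assoc,
    ← Real.exp_add, ← Real.exp_add]
  congr 1
  field_simp
  ring
end
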